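/- arXiv:2202.05646 — 5 statements merged into one kernel-verified Lean document; each statement's English description precedes it below -/
import Mathlib

section
/- Let l ∈ ℤ with l ≠ 0, let a ∈ ℂ with a ≠ 0, and let h be a holomorphic function on the unit disc 𝔻. If the map z ↦ a·z^l·(1 + z·h(z)) is injective on the punctured unit disc 𝔻*, then l = 1 or l = −1. -/
open Complex Metric Set Filter Topology

/-!
Near `0`, `u z = 1 + z * h z` has the holomorphic `l`-th root `φ = u ^ (1 / l)` with `φ 0 = 1`, so
the map is `a * ψ z ^ l` with `ψ z = z * φ z`. Since `ψ' 0 = 1`, the inverse function theorem makes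
`ψ` map neighbourhoods of `0` onto neighbourhoods of `0`, so injectivity would pass to `w ↦ a * w ^ l`
on a punctured neighbourhood of `0`. Unless `l = ±1` there is an `l`-th root of unity `ζ ≠ 1`, and
`w`, `ζ * w` collide.
-/

theorem exists_zpow_eq_one_ne_one {l : ℤ} (hl₁ : l ≠ 1) (hl₂ : l ≠ -1) :
    ∃ ζ : ℂ, ζ ≠ 0 ∧ ζ ≠ 1 ∧ ζ ^ l = 1 := by
  obtain rfl | hl₀ := eq_or_ne l 0
  · exact ⟨-1, by norm_num, by norm_num, zpow_zero _⟩
  have hζ := isPrimitiveRoot_exp l.natAbs (by omega)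
  exact ⟨_, hζ.ne_zero (by omega), hζ.ne_one (by omega),
    (hζ.zpow_eq_one_iff_dvd l).2 Int.natAbs_dvd_self⟩

theorem not_injOn_const_mul_zpow {l : ℤ} (hl₁ : l ≠ 1) (hl₂ : l ≠ -1) (a : ℂ) {t : Set ℂ}
    (ht : t ∈ 𝓝 0) : ¬ InjOn (fun w : ℂ => a * w ^ l) (t \ {0}) := by
  intro hinj
  obtain ⟨ζ, hζ₀, hζ₁, hζl⟩ := exists_zpow_eq_one_ne_one hl₁ hl₂
  have hrot : (ζ * ·) ⁻¹' t ∈ 𝓝 (0 : ℂ) :=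
    (continuous_const_mul ζ).continuousAt.preimage_mem_nhds (by simpa using ht)
  obtain ⟨w, ⟨hwt, hζwt⟩, hw₀⟩ := Filter.nonempty_of_mem
    (inter_mem (mem_nhdsWithin_of_mem_nhds (inter_mem ht hrot)) self_mem_nhdsWithin :
      _ ∈ 𝓝[≠] (0 : ℂ))
  have := hinj ⟨hζwt, mul_ne_zero hζ₀ hw₀⟩ ⟨hwt, hw₀⟩ (by simp [mul_zpow, hζl])
  exact hζ₁ (mul_right_cancel₀ hw₀ (this.trans (one_mul w).symm))

theorem not_injOn_comp_of_nhds_le_map {X Y Z : Type*} [TopologicalSpace X] [TopologicalSpace Y]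
    {g : Y → Z} {ψ : X → Y} {x₀ : X} {y₀ : Y} (hψ₀ : ψ x₀ = y₀) (hψ : 𝓝 y₀ ≤ map ψ (𝓝 x₀))
    (hg : ∀ t ∈ 𝓝 y₀, ¬ InjOn g (t \ {y₀})) {s : Set X} (hs : s ∈ 𝓝 x₀) :
    ¬ InjOn (g ∘ ψ) (s \ {x₀}) := by
  intro hinj
  refine hg (ψ '' s) (hψ (mem_map.2 (mem_of_superset hs (subset_preimage_image ψ s)))) ?_
  rintro _ ⟨⟨z₁, hz₁, rfl⟩, hw₁⟩ _ ⟨⟨z₂, hz₂, rfl⟩, hw₂⟩ hg₁₂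
  have hne : ∀ {z}, ψ z ≠ y₀ → z ≠ x₀ := fun h hz => h (hz ▸ hψ₀)
  exact congrArg ψ (hinj ⟨hz₁, hne hw₁⟩ ⟨hz₂, hne hw₂⟩ hg₁₂)

theorem map_nhds_zero_id_mul {𝕜 : Type*} [NontriviallyNormedField 𝕜] [CompleteSpace 𝕜]
    {φ : 𝕜 → 𝕜} {φ' : 𝕜} (hφ : HasStrictDerivAt φ φ' 0) (h₀ : φ 0 ≠ 0) :
    map (fun z => z * φ z) (𝓝 0) = 𝓝 0 := by
  have hψ : HasStrictDerivAt (fun z => z * φ z) (φ 0) 0 := by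
    simpa using (hasStrictDerivAt_id (0 : 𝕜)).fun_mul hφ
  simpa using hψ.map_nhds_eq h₀

theorem cpow_int_inv_zpow (x : ℂ) {n : ℤ} (hn : n ≠ 0) : (x ^ (n⁻¹ : ℂ)) ^ n = x := by
  rw [← cpow_int_mul, mul_inv_cancel₀ (by exact_mod_cast hn), cpow_one]

theorem injective_zpow_factor_order_pm_one_general
    (l : ℤ) (hl : l ≠ 0) (a : ℂ)
    (h : ℂ → ℂ) (hh : DifferentiableOn ℂ h (ball (0 : ℂ) 1))
    (hinj : InjOn (fun z : ℂ => a * z ^ l * (1 + z * h z))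
      (ball (0 : ℂ) 1 \ {0})) :
    l = 1 ∨ l = -1 := by
  set u : ℂ → ℂ := fun z => 1 + z * h z
  set φ : ℂ → ℂ := fun z => u z ^ (l⁻¹ : ℂ)
  have hu : AnalyticAt ℂ u 0 :=
    analyticAt_const.add (analyticAt_id.mul (hh.analyticAt (ball_mem_nhds 0 one_pos)))
  have hφ : AnalyticAt ℂ φ 0 := hu.cpow analyticAt_const (by simp [u])
  have hfactor : (fun z : ℂ => a * z ^ l * u z) = (fun w => a * w ^ l) ∘ (fun z => z * φ z) := by
    ext z
    simp only [Function.comp, mul_zpow, φ, cpow_int_inv_zpow _ hl, mul_assoc]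
  have hψ : map (fun z => z * φ z) (𝓝 0) = 𝓝 0 :=
    map_nhds_zero_id_mul hφ.hasStrictDerivAt (by simp [φ, u])
  by_contra! hl'
  refine not_injOn_comp_of_nhds_le_map (by simp) hψ.ge
    (fun t ht => not_injOn_const_mul_zpow hl'.1 hl'.2 a ht) (ball_mem_nhds 0 one_pos) ?_
  rwa [← hfactor]

/-- If `z ↦ a·z^l·(1 + z·h(z))` (with `a ≠ 0`, `l ∈ ℤ` nonzero, `h`
holomorphic on the unit disc) is injective on the punctured unit disc, then `l = 1`
or `l = -1`. -/
theorem injective_zpow_factor_order_pm_one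
    (l : ℤ) (hl : l ≠ 0) (a : ℂ) (ha : a ≠ 0)
    (h : ℂ → ℂ) (hh : DifferentiableOn ℂ h (ball (0 : ℂ) 1))
    (hinj : InjOn (fun z : ℂ => a * z ^ l * (1 + z * h z))
      (ball (0 : ℂ) 1 \ {0})) :
    l = 1 ∨ l = -1 :=
  injective_zpow_factor_order_pm_one_general l hl a h hh hinj
end

section
/- Let f be a holomorphic function on the punctured unit disc 𝔻* that is injective on 𝔻*. Then the derivative f′ is nonvanishing on 𝔻*, and the Schwarzian derivative S(f), which is holomorphic on 𝔻*, extends to a holomorphic function on the entire unit disc 𝔻. -/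
open Complex Metric Set Filter Topology

/-- The Schwarzian derivative `S(f) = (f''/f')' - (1/2)·(f''/f')²`. -/
noncomputable def schwarzian (f : ℂ → ℂ) (z : ℂ) : ℂ :=
  deriv (fun w => deriv (deriv f) w / deriv f w) z
    - (1 / 2) * (deriv (deriv f) z / deriv f z) ^ 2

/-!
At a critical point `z₀` of multiplicity `n ≥ 2` one can write `F - F z₀ = φⁿ` with `φ` a local
coordinate, so `F` is `n`-to-one near `z₀`; hence an injective holomorphic function has
nonvanishing derivative, even when injectivity is only known off `z₀`. The image of a disc lying
away from `0` is open, so near `0` the function `f` omits a disc `‖f - w‖ < ε`; then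
`G = 1 / (f - w)` is bounded, hence extends holomorphically across `0`, and is still injective off
`0`, so `G'(0) ≠ 0`. The Schwarzian is invariant under `f ↦ w + 1 / f`, so `S(G)` extends `S(f)`.
-/

theorem Set.InjOn.not_eventually_eq_const {X Y : Type*} [TopologicalSpace X] [T1Space X] {x : X}
    [(𝓝[≠] x).NeBot] {f : X → Y} {s : Set X} (hs : s ∈ 𝓝[≠] x) (hinj : InjOn f s) (c : Y) :
    ¬ ∀ᶠ z in 𝓝 x, f z = c := by
  intro hc
  have ht : s ∩ {z | f z = c} ∈ 𝓝[≠] x := inter_mem hs (nhdsWithin_le_nhds hc)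
  have hinf : (s ∩ {z | f z = c}).Infinite :=
    mt finite_insert.2 (infinite_of_mem_nhds x (insert_mem_nhds_iff.2 ht))
  obtain ⟨a, ⟨has, hac⟩, b, ⟨hbs, hbc⟩, hab⟩ := hinf.nontrivial
  exact hab (hinj has hbs (hac.trans hbc.symm))

theorem Complex.not_injOn_pow_sdiff_zero {n : ℕ} (hn : 2 ≤ n) {U : Set ℂ} (hU : U ∈ 𝓝 0) :
    ¬ InjOn (· ^ n) (U \ {0}) := by
  intro hinj
  obtain ⟨ζ, hζ⟩ : ∃ ζ : ℂ, IsPrimitiveRoot ζ n := ⟨_, Complex.isPrimitiveRoot_exp n (by omega)⟩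
  have hmul : Tendsto (ζ * ·) (𝓝 0) (𝓝 0) := by
    simpa using (continuous_const_mul ζ).tendsto 0
  obtain ⟨a, ⟨haU, hζaU⟩, ha0⟩ :=
    Filter.nonempty_of_mem (sdiff_mem_nhdsWithin_compl (inter_mem hU (hmul hU)) {0})
  have hζa0 : ζ * a ≠ 0 := mul_ne_zero (hζ.ne_zero (by omega)) ha0
  have hζa : ζ * a = a :=
    hinj ⟨hζaU, hζa0⟩ ⟨haU, ha0⟩ (by simp [mul_pow, hζ.pow_eq_one])
  exact hζ.ne_one (by omega) (mul_left_eq_self₀.1 hζa |>.resolve_right ha0)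

theorem AnalyticAt.exists_pow_eq {h : ℂ → ℂ} {z₀ : ℂ} (hh : AnalyticAt ℂ h z₀) (h0 : h z₀ ≠ 0)
    {n : ℕ} (hn : n ≠ 0) : ∃ q : ℂ → ℂ, AnalyticAt ℂ q z₀ ∧ q z₀ ≠ 0 ∧ ∀ z, q z ^ n = h z := by
  obtain ⟨c, hc⟩ := IsAlgClosed.exists_pow_nat_eq (h z₀) (Nat.pos_of_ne_zero hn)
  refine ⟨fun z => c * (h z / h z₀) ^ (n⁻¹ : ℂ), ?_, ?_, fun z => ?_⟩
  · exact analyticAt_const.mul ((hh.div analyticAt_const h0).cpow analyticAt_const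
      (by simp [h0]))
  · simpa [div_self h0] using ne_zero_pow hn (hc ▸ h0)
  · rw [mul_pow, cpow_nat_inv_pow _ hn, hc]
    field_simp

theorem AnalyticAt.exists_eventuallyEq_pow_of_analyticOrderAt_eq {g : ℂ → ℂ} {z₀ : ℂ} {n : ℕ}
    (hg : AnalyticAt ℂ g z₀) (hord : analyticOrderAt g z₀ = n) (hn : n ≠ 0) :
    ∃ φ : ℂ → ℂ, ∃ c ≠ 0, HasStrictDerivAt φ c z₀ ∧ φ z₀ = 0 ∧
      g =ᶠ[𝓝 z₀] fun z => φ z ^ n := by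
  obtain ⟨h, hh, hh0, hgh⟩ := hg.analyticOrderAt_eq_natCast.1 hord
  obtain ⟨q, hq, hq0, hqh⟩ := hh.exists_pow_eq hh0 hn
  refine ⟨fun z => (z - z₀) * q z, q z₀, hq0, ?_, by simp, ?_⟩
  · simpa using
      HasStrictDerivAt.fun_mul ((hasStrictDerivAt_id z₀).sub_const z₀) hq.hasStrictDerivAt
  · filter_upwards [hgh] with z hz
    rw [hz, smul_eq_mul, mul_pow, hqh]

theorem AnalyticAt.deriv_ne_zero_of_injOn {F : ℂ → ℂ} {z₀ : ℂ} {s : Set ℂ}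
    (hF : AnalyticAt ℂ F z₀) (hs : s ∈ 𝓝 z₀) (hinj : InjOn F (s \ {z₀})) : deriv F z₀ ≠ 0 := by
  set g := fun z => F z - F z₀
  have hg : AnalyticAt ℂ g z₀ := hF.sub analyticAt_const
  rcases eq_or_ne (analyticOrderAt g z₀) ⊤ with htop | htop
  · have hconst : ∀ᶠ z in 𝓝 z₀, F z = F z₀ := by
      filter_upwards [analyticOrderAt_eq_top.1 htop] with z hz using sub_eq_zero.1 hz
    exact absurd hconst (hinj.not_eventually_eq_const (sdiff_mem_nhdsWithin_compl hs _) _)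
  obtain ⟨n, hn⟩ := ENat.ne_top_iff_exists.1 htop
  have hn0 : n ≠ 0 := by
    rintro rfl
    exact hg.analyticOrderAt_eq_zero.1 (by simpa using hn.symm) (sub_self _)
  obtain ⟨φ, c, hc, hφ, hφ0, hgφ⟩ := hg.exists_eventuallyEq_pow_of_analyticOrderAt_eq hn.symm hn0
  intro hF'
  have hn1 : n ≠ 1 := by
    rintro rfl
    have hgc : HasDerivAt g c z₀ := hφ.hasDerivAt.congr_of_eventuallyEq (by simpa using hgφ)
    have hgF : deriv g z₀ = deriv F z₀ := deriv_sub_const _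
    exact hc (hgc.deriv.symm.trans (hgF.trans hF'))
  refine Complex.not_injOn_pow_sdiff_zero (n := n) (by omega)
    (U := φ '' (s ∩ {z | g z = φ z ^ n})) ?_ ?_
  · rw [← hφ0, ← hφ.map_nhds_eq hc]
    exact image_mem_map (inter_mem hs hgφ)
  rintro _ ⟨⟨p, ⟨hps, hpg⟩, rfl⟩, hp0⟩ _ ⟨⟨q, ⟨hqs, hqg⟩, rfl⟩, hq0⟩ hpq
  have hp : p ≠ z₀ := by rintro rfl; exact hp0 hφ0
  have hq : q ≠ z₀ := by rintro rfl; exact hq0 hφ0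
  rw [hinj ⟨hps, hp⟩ ⟨hqs, hq⟩ (sub_left_inj.1 (hpg.trans (hpq.trans hqg.symm)))]

theorem AnalyticOnNhd.deriv_ne_zero_of_injOn_sdiff {F : ℂ → ℂ} {U : Set ℂ} {c z : ℂ}
    (hF : AnalyticOnNhd ℂ F U) (hU : IsOpen U) (hinj : InjOn F (U \ {c})) (hz : z ∈ U) :
    deriv F z ≠ 0 := by
  rcases eq_or_ne z c with rfl | hzc
  · exact (hF z hz).deriv_ne_zero_of_injOn (hU.mem_nhds hz) hinj
  · exact (hF z hz).deriv_ne_zero_of_injOn ((hU.sdiff isClosed_singleton).mem_nhds ⟨hz, hzc⟩)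
      (hinj.mono sdiff_subset)

theorem AnalyticOnNhd.isOpen_image_of_injOn {f : ℂ → ℂ} {U : Set ℂ} (hf : AnalyticOnNhd ℂ f U)
    (hU : IsOpen U) (hinj : InjOn f U) : IsOpen (f '' U) := by
  refine isOpen_iff_mem_nhds.2 ?_
  rintro _ ⟨z, hz, rfl⟩
  have hUz := hU.mem_nhds hz
  rcases (hf z hz).eventually_constant_or_nhds_le_map_nhds with hconst | hopen
  · exact absurd hconst (hinj.not_eventually_eq_const (mem_nhdsWithin_of_mem_nhds hUz) _)
  · exact hopen (image_mem_map hUz)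

theorem AnalyticOnNhd.exists_forall_le_norm_sub_of_injOn {f : ℂ → ℂ} {U B V : Set ℂ}
    (hf : AnalyticOnNhd ℂ f U) (hinj : InjOn f U) (hBo : IsOpen B) (hBne : B.Nonempty)
    (hBU : B ⊆ U) (hVU : V ⊆ U) (hBV : Disjoint B V) :
    ∃ w, ∃ ε > 0, ∀ z ∈ V, ε ≤ ‖f z - w‖ := by
  obtain ⟨b, hb⟩ := hBne
  have himg : IsOpen (f '' B) := (hf.mono hBU).isOpen_image_of_injOn hBo (hinj.mono hBU)
  obtain ⟨ε, hε, hball⟩ := Metric.isOpen_iff.1 himg (f b) (mem_image_of_mem f hb)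
  refine ⟨f b, ε, hε, fun z hz => not_lt.1 fun hlt => ?_⟩
  obtain ⟨a, ha, hfa⟩ := hball (mem_ball_iff_norm.2 hlt)
  exact hBV.ne_of_mem ha hz (hinj (hBU ha) (hVU hz) hfa)

theorem Complex.exists_differentiableOn_eqOn_add_inv_of_le_norm_sub {f : ℂ → ℂ} {s : Set ℂ}
    {c w : ℂ} {ε : ℝ} (hs : s ∈ 𝓝 c) (hf : DifferentiableOn ℂ f (s \ {c})) (hε : 0 < ε)
    (hfar : ∀ z ∈ s \ {c}, ε ≤ ‖f z - w‖) :
    ∃ G : ℂ → ℂ, DifferentiableOn ℂ G s ∧ (∀ z ∈ s \ {c}, G z ≠ 0) ∧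
      EqOn f (fun z => w + (G z)⁻¹) (s \ {c}) := by
  have hne : ∀ z ∈ s \ {c}, f z - w ≠ 0 := fun z hz => norm_pos_iff.1 (hε.trans_le (hfar z hz))
  have hbdd : BddAbove (norm ∘ (fun z => (f z - w)⁻¹) '' (s \ {c})) := by
    refine ⟨ε⁻¹, ?_⟩
    rintro _ ⟨z, hz, rfl⟩
    simpa using inv_anti₀ hε (hfar z hz)
  refine ⟨_, differentiableOn_update_limUnder_of_bddAbove hs ((hf.sub_const w).inv hne) hbdd,
    fun z hz => ?_, fun z hz => ?_⟩
  · simpa [Function.update_of_ne hz.2] using hne z hz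
  · simp [Function.update_of_ne hz.2]

theorem exists_differentiableOn_eqOn_add_inv_of_injOn {f : ℂ → ℂ}
    (hf : DifferentiableOn ℂ f (ball 0 1 \ {0})) (hinj : InjOn f (ball 0 1 \ {0})) :
    ∃ w : ℂ, ∃ G : ℂ → ℂ, DifferentiableOn ℂ G (ball 0 (1 / 2)) ∧
      (∀ z ∈ ball 0 (1 / 2) \ {0}, G z ≠ 0) ∧ InjOn G (ball 0 (1 / 2) \ {0}) ∧
      EqOn f (fun z => w + (G z)⁻¹) (ball 0 (1 / 2) \ {0}) := by
  have hfa : AnalyticOnNhd ℂ f (ball 0 1 \ {0}) :=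
    hf.analyticOnNhd (isOpen_ball.sdiff isClosed_singleton)
  have hBV : Disjoint (ball (3 / 4 : ℂ) (1 / 4)) (ball 0 (1 / 2)) :=
    ball_disjoint_ball (by norm_num)
  have hBU : ball (3 / 4 : ℂ) (1 / 4) ⊆ ball 0 1 \ {0} := fun z hz =>
    ⟨ball_subset_ball' (by norm_num) hz, hBV.ne_of_mem hz (mem_ball_self (by norm_num))⟩
  have hVU : ball (0 : ℂ) (1 / 2) \ {0} ⊆ ball 0 1 \ {0} :=
    sdiff_subset_sdiff_left (ball_subset_ball (by norm_num))
  obtain ⟨w, ε, hε, hfar⟩ := hfa.exists_forall_le_norm_sub_of_injOn hinj isOpen_ball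
    ⟨3 / 4, mem_ball_self (by norm_num)⟩ hBU hVU (hBV.mono_right sdiff_subset)
  obtain ⟨G, hGd, hG0, hfG⟩ := Complex.exists_differentiableOn_eqOn_add_inv_of_le_norm_sub
    (ball_mem_nhds 0 (by norm_num)) (hf.mono hVU) hε hfar
  exact ⟨w, G, hGd, hG0, InjOn.of_comp (g := fun y => w + y⁻¹) ((hinj.mono hVU).congr hfG), hfG⟩

noncomputable def preSchwarzian (f : ℂ → ℂ) (z : ℂ) : ℂ := deriv (deriv f) z / deriv f z

theorem schwarzian_eq_preSchwarzian (f : ℂ → ℂ) (z : ℂ) :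
    schwarzian f z = deriv (preSchwarzian f) z - 1 / 2 * preSchwarzian f z ^ 2 := rfl

theorem Filter.EventuallyEq.schwarzian_eq {f g : ℂ → ℂ} {z : ℂ} (h : f =ᶠ[𝓝 z] g) :
    schwarzian f z = schwarzian g z := by
  have hP : preSchwarzian f =ᶠ[𝓝 z] preSchwarzian g := h.deriv.deriv.div h.deriv
  rw [schwarzian_eq_preSchwarzian, schwarzian_eq_preSchwarzian, hP.deriv_eq, hP.eq_of_nhds]

theorem schwarzian_const_add (f : ℂ → ℂ) (w : ℂ) :
    schwarzian (fun z => w + f z) = schwarzian f := by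
  funext z
  simp only [schwarzian, deriv_const_add']

theorem AnalyticAt.schwarzian {f : ℂ → ℂ} {z : ℂ} (hf : AnalyticAt ℂ f z) (hf' : deriv f z ≠ 0) :
    AnalyticAt ℂ (_root_.schwarzian f) z := by
  have hP : AnalyticAt ℂ (preSchwarzian f) z := hf.deriv.deriv.div hf.deriv hf'
  exact hP.deriv.sub (analyticAt_const.mul (hP.pow 2))

theorem preSchwarzian_inv {F : ℂ → ℂ} {z : ℂ} (hF : AnalyticAt ℂ F z) (hF0 : F z ≠ 0) :
    preSchwarzian (fun x => (F x)⁻¹) z = preSchwarzian F z - 2 * (deriv F z / F z) := by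
  have hderiv : deriv (fun x => (F x)⁻¹) =ᶠ[𝓝 z] fun x => -deriv F x / F x ^ 2 := by
    filter_upwards [hF.eventually_analyticAt, hF.continuousAt.eventually_ne hF0] with x hx hx0
    exact deriv_fun_inv'' hx.differentiableAt hx0
  have h2 := hF.deriv.differentiableAt.hasDerivAt.fun_neg.fun_div
    (hF.differentiableAt.hasDerivAt.fun_pow 2) (pow_ne_zero 2 hF0)
  rw [preSchwarzian, preSchwarzian, hderiv.deriv_eq, h2.deriv, hderiv.eq_of_nhds]
  field_simp
  ring

theorem schwarzian_inv {F : ℂ → ℂ} {z : ℂ} (hF : AnalyticAt ℂ F z) (hF0 : F z ≠ 0)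
    (hF' : deriv F z ≠ 0) : schwarzian (fun x => (F x)⁻¹) z = schwarzian F z := by
  have hP : preSchwarzian (fun x => (F x)⁻¹) =ᶠ[𝓝 z]
      fun x => preSchwarzian F x - 2 * (deriv F x / F x) := by
    filter_upwards [hF.eventually_analyticAt, hF.continuousAt.eventually_ne hF0] with x hx hx0
    exact preSchwarzian_inv hx hx0
  have hPF : AnalyticAt ℂ (preSchwarzian F) z := hF.deriv.deriv.div hF.deriv hF'
  have hQ := hF.deriv.differentiableAt.hasDerivAt.fun_div hF.differentiableAt.hasDerivAt hF0
  rw [schwarzian_eq_preSchwarzian, schwarzian_eq_preSchwarzian, hP.deriv_eq,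
    (hPF.differentiableAt.hasDerivAt.fun_sub (hQ.const_mul 2)).deriv, preSchwarzian_inv hF hF0,
    preSchwarzian]
  field_simp
  ring

theorem schwarzian_eqOn_of_eqOn_add_inv {f G : ℂ → ℂ} {U : Set ℂ} {w : ℂ}
    (hfG : EqOn f (fun z => w + (G z)⁻¹) U) (hU : IsOpen U) (hG : AnalyticOnNhd ℂ G U)
    (hG0 : ∀ z ∈ U, G z ≠ 0) (hG' : ∀ z ∈ U, deriv G z ≠ 0) :
    EqOn (schwarzian f) (schwarzian G) U := fun z hz => by
  rw [(hfG.eventuallyEq_of_mem (hU.mem_nhds hz)).schwarzian_eq, schwarzian_const_add,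
    schwarzian_inv (hG z hz) (hG0 z hz) (hG' z hz)]

theorem DifferentiableOn.update_of_eventuallyEq {𝕜 E : Type*} [NontriviallyNormedField 𝕜]
    [DecidableEq 𝕜] [NormedAddCommGroup E] [NormedSpace 𝕜 E] {g h : 𝕜 → E} {s : Set 𝕜} {c : 𝕜}
    (hg : DifferentiableOn 𝕜 g (s \ {c})) (hs : IsOpen s) (hh : DifferentiableAt 𝕜 h c)
    (hgh : g =ᶠ[𝓝[≠] c] h) : DifferentiableOn 𝕜 (Function.update g c (h c)) s := by
  intro z hz
  refine DifferentiableAt.differentiableWithinAt ?_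
  rcases eq_or_ne z c with rfl | hzc
  · refine hh.congr_of_eventuallyEq ?_
    filter_upwards [eventually_nhdsWithin_iff.1 hgh] with x hx
    rcases eq_or_ne x z with rfl | hxz
    · simp
    · simp [Function.update_of_ne hxz, hx hxz]
  · have hmem : s \ {c} ∈ 𝓝 z := (hs.sdiff isClosed_singleton).mem_nhds ⟨hz, hzc⟩
    refine (hg.differentiableAt hmem).congr_of_eventuallyEq ?_
    filter_upwards [hmem] with x hx using Function.update_of_ne hx.2 _ _

/-- If `f` is holomorphic and injective on the punctured unit disc,
then `f'` is nonvanishing there and the Schwarzian derivative `S(f)` extends to a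
holomorphic function on the whole unit disc. -/
theorem schwarzian_of_injective_extends_holomorphically
    (f : ℂ → ℂ)
    (hf : DifferentiableOn ℂ f (ball (0 : ℂ) 1 \ {0}))
    (hinj : InjOn f (ball (0 : ℂ) 1 \ {0})) :
    (∀ z ∈ ball (0 : ℂ) 1 \ {0}, deriv f z ≠ 0) ∧
    ∃ Ξ : ℂ → ℂ, DifferentiableOn ℂ Ξ (ball (0 : ℂ) 1) ∧
      ∀ z ∈ ball (0 : ℂ) 1 \ {0}, Ξ z = schwarzian f z := by
  have hUo : IsOpen (ball (0 : ℂ) 1 \ {0}) := isOpen_ball.sdiff isClosed_singleton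
  have hfa : AnalyticOnNhd ℂ f (ball (0 : ℂ) 1 \ {0}) := hf.analyticOnNhd hUo
  have hf' : ∀ z ∈ ball (0 : ℂ) 1 \ {0}, deriv f z ≠ 0 := fun z hz =>
    (hfa z hz).deriv_ne_zero_of_injOn (hUo.mem_nhds hz) (hinj.mono sdiff_subset)
  obtain ⟨w, G, hGd, hG0, hGinj, hfG⟩ := exists_differentiableOn_eqOn_add_inv_of_injOn hf hinj
  have hGa : AnalyticOnNhd ℂ G (ball 0 (1 / 2)) := hGd.analyticOnNhd isOpen_ball
  have hG' : ∀ z ∈ ball (0 : ℂ) (1 / 2), deriv G z ≠ 0 := fun z hz =>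
    hGa.deriv_ne_zero_of_injOn_sdiff isOpen_ball hGinj hz
  have hSfG : schwarzian f =ᶠ[𝓝[≠] 0] schwarzian G :=
    eventuallyEq_of_mem (sdiff_mem_nhdsWithin_compl (ball_mem_nhds 0 one_half_pos) _)
      (schwarzian_eqOn_of_eqOn_add_inv hfG (isOpen_ball.sdiff isClosed_singleton)
        (fun z hz => hGa z hz.1) hG0 (fun z hz => hG' z hz.1))
  have h0 : (0 : ℂ) ∈ ball 0 (1 / 2) := mem_ball_self one_half_pos
  refine ⟨hf', Function.update (schwarzian f) 0 (schwarzian G 0), ?_,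
    fun z hz => Function.update_of_ne hz.2 _ _⟩
  exact DifferentiableOn.update_of_eventuallyEq
    (fun z hz => ((hfa z hz).schwarzian (hf' z hz)).differentiableAt.differentiableWithinAt)
    isOpen_ball ((hGa 0 h0).schwarzian (hG' 0 h0)).differentiableAt hSfG
end

section
/- Let U ⊆ ℂ be an open set, ξ a holomorphic function on U, and h a holomorphic function on U that is nowhere vanishing and satisfies h″(z) + (1/2)·ξ(z)·h(z) = 0 for all z ∈ U. If φ is a holomorphic function on U with φ′(z) = 1/h(z)² for all z ∈ U, then φ′ is nowhere vanishing and the Schwarzian derivative of φ satisfies S(φ)(z) = ξ(z) for all z ∈ U. -/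
open Complex Metric Set Filter Topology

/- Writing `φ' = h⁻²`, the pre-Schwarzian `φ''/φ' = (log φ')'` equals `-2 h'/h`, so
`S(φ) = -2 (h'/h)' - 2 (h'/h)² = -2 h''/h`, which the equation `h'' = -(1/2) ξ h` turns into `ξ`. -/

section LogDeriv

variable {𝕜 𝕜' : Type*} [NontriviallyNormedField 𝕜] [NontriviallyNormedField 𝕜']
  [NormedAlgebra 𝕜 𝕜'] {h : 𝕜 → 𝕜'} {x : 𝕜}

theorem logDeriv_one_div_sq (hh : DifferentiableAt 𝕜 h x) :
    logDeriv (fun w => 1 / h w ^ 2) x = -2 * logDeriv h x := by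
  have hinv : (fun w => 1 / h w ^ 2) = (h · ^ (-2 : ℤ)) := by
    funext w
    simp [zpow_neg]
  rw [hinv, logDeriv_fun_zpow hh]
  norm_num

theorem hasDerivAt_logDeriv (hh : DifferentiableAt 𝕜 h x)
    (hh' : DifferentiableAt 𝕜 (deriv h) x) (hx : h x ≠ 0) :
    HasDerivAt (logDeriv h) (deriv (deriv h) x / h x - logDeriv h x ^ 2) x := by
  refine (hh'.hasDerivAt.div hh.hasDerivAt hx).congr_deriv ?_
  rw [logDeriv_apply]
  field_simp

end LogDeriv

theorem schwarzian_eq_logDeriv (f : ℂ → ℂ) (z : ℂ) :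
    schwarzian f z = deriv (logDeriv (deriv f)) z - (1 / 2) * logDeriv (deriv f) z ^ 2 :=
  rfl

theorem schwarzian_eq_of_deriv_eventuallyEq_one_div_sq {f h : ℂ → ℂ} {z : ℂ}
    (hf : deriv f =ᶠ[𝓝 z] fun w => 1 / h w ^ 2) (hh : ∀ᶠ w in 𝓝 z, DifferentiableAt ℂ h w)
    (hh' : DifferentiableAt ℂ (deriv h) z) (hz : h z ≠ 0) :
    schwarzian f z = -2 * deriv (deriv h) z / h z := by
  have hlog : logDeriv (deriv f) =ᶠ[𝓝 z] fun w => -2 * logDeriv h w := by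
    filter_upwards [hf.eventuallyEq_nhds, hh] with w hfw hhw
    rw [(logDeriv_congr_nhds hfw).self_of_nhds, logDeriv_one_div_sq hhw]
  rw [schwarzian_eq_logDeriv, hlog.deriv_eq, hlog.self_of_nhds,
    ((hasDerivAt_logDeriv hh.self_of_nhds hh' hz).const_mul (-2)).deriv]
  ring

theorem schwarzian_eq_of_ode_solution_general
    (U : Set ℂ) (hU : IsOpen U) (ξ h φ : ℂ → ℂ)
    (hh : DifferentiableOn ℂ h U)
    (hh0 : ∀ z ∈ U, h z ≠ 0)
    (hode : ∀ z ∈ U, deriv (deriv h) z + (1 / 2) * ξ z * h z = 0)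
    (hφ' : ∀ z ∈ U, deriv φ z = 1 / (h z) ^ 2) :
    (∀ z ∈ U, deriv φ z ≠ 0) ∧ ∀ z ∈ U, schwarzian φ z = ξ z := by
  have hha : AnalyticOnNhd ℂ h U := hh.analyticOnNhd hU
  refine ⟨fun z hz => by simpa [hφ' z hz] using hh0 z hz, fun z hz => ?_⟩
  have hdiff : ∀ᶠ w in 𝓝 z, DifferentiableAt ℂ h w :=
    eventually_of_mem (hU.mem_nhds hz) fun w hw => (hha w hw).differentiableAt
  rw [schwarzian_eq_of_deriv_eventuallyEq_one_div_sq (eventually_of_mem (hU.mem_nhds hz) hφ')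
    hdiff (hha.deriv z hz).differentiableAt (hh0 z hz)]
  field_simp [hh0 z hz]
  linear_combination -2 * hode z hz

/-- variation of parameters: if `h` is a nowhere-vanishing holomorphic
solution of `h'' + (1/2)·ξ·h = 0` on an open set `U` and `φ` is holomorphic on `U`
with `φ' = 1/h²`, then `φ'` is nowhere vanishing and `S(φ) = ξ` on `U`. -/
theorem schwarzian_eq_of_ode_solution
    (U : Set ℂ) (hU : IsOpen U) (ξ h φ : ℂ → ℂ)
    (hξ : DifferentiableOn ℂ ξ U)
    (hh : DifferentiableOn ℂ h U)
    (hh0 : ∀ z ∈ U, h z ≠ 0)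
    (hode : ∀ z ∈ U, deriv (deriv h) z + (1 / 2) * ξ z * h z = 0)
    (hφ : DifferentiableOn ℂ φ U)
    (hφ' : ∀ z ∈ U, deriv φ z = 1 / (h z) ^ 2) :
    (∀ z ∈ U, deriv φ z ≠ 0) ∧ ∀ z ∈ U, schwarzian φ z = ξ z :=
  schwarzian_eq_of_ode_solution_general U hU ξ h φ hh hh0 hode hφ'
end

section
/- Let G be a holomorphic function on the unit disc 𝔻, let a₋₁ ∈ ℂ with a₋₁ ≠ 0, and set g(z) = a₋₁/z + G(z) on 𝔻*. Let c ∈ ℂ, θ ∈ ℝ, let L be a branch of the logarithm on 𝔻 ∖ l^θ, and put φ(z) = g(z) + (c/(2πi))·L(z) on 𝔻 ∖ l^θ. Then there exists ρ ∈ (0,1) such that φ′ is nonvanishing on B(0,ρ) ∖ l^θ and the function z ↦ S(φ)(z) + c/(a₋₁·π·i·z), defined on B(0,ρ) ∖ l^θ, extends to a holomorphic function on the disc B(0,ρ). In particular the Schwarzian derivative S(φ) has at most a simple pole at 0, with residue −c/(a₋₁·π·i). -/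
open Complex Metric Set Filter Topology

/-- The closed ray `{t·e^{iθ} : t ≥ 0} ⊆ ℂ`. -/
def lray (θ : ℝ) : Set ℂ :=
  {z : ℂ | ∃ t : ℝ, 0 ≤ t ∧ z = (t : ℂ) * Complex.exp (θ * Complex.I)}

/-!
Near `0` one has `φ' = P / z²` with `P(w) = -a₋₁ + k w + w² G'(w)`, `k = c / (2πi)`, because
`L' = 1/z`. Since `P(0) = -a₋₁ ≠ 0`, `Q = P'/P` is holomorphic near `0`, and
`φ''/φ' = Q - 2/z` gives `S(φ) = Q' - Q²/2 + 2Q/z`. The only singular term is `2Q(0)/z`, and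
`Q(0) = P'(0)/P(0) = -k/a₋₁`, which yields the residue `-2k/a₋₁ = -c/(a₋₁πi)`.
-/

open scoped ComplexOrder

lemma mem_lray_iff {θ : ℝ} {z : ℂ} : z ∈ lray θ ↔ 0 ≤ z * exp (-(θ * I)) := by
  constructor
  · rintro ⟨t, ht, rfl⟩
    rw [mul_assoc, ← exp_add, add_neg_cancel, exp_zero, mul_one]
    exact_mod_cast ht
  · intro h
    refine ⟨(z * exp (-(θ * I))).re, (nonneg_iff.mp h).1, ?_⟩
    rw [← eq_re_of_ofReal_le (r := 0) (by rwa [ofReal_zero]), mul_assoc, ← exp_add,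
      neg_add_cancel, exp_zero, mul_one]

lemma isClosed_lray (θ : ℝ) : IsClosed (lray θ) := by
  rw [show lray θ = {z | 0 ≤ z * exp (-(θ * I))} from ext fun _ => mem_lray_iff]
  exact isClosed_le continuous_const (by fun_prop)

lemma zero_mem_lray (θ : ℝ) : (0 : ℂ) ∈ lray θ := ⟨0, le_rfl, by simp⟩

lemma Metric.exists_lt_forall_mem_ball_of_eventually {X : Type*} [PseudoMetricSpace X] {x : X}
    {p : X → Prop} (hp : ∀ᶠ y in 𝓝 x, p y) {r : ℝ} (hr : 0 < r) :
    ∃ ρ, 0 < ρ ∧ ρ < r ∧ ∀ y ∈ ball x ρ, p y := by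
  obtain ⟨ε, hε, hεp⟩ := eventually_nhds_iff_ball.mp hp
  exact ⟨min ε (r / 2), by positivity, by linarith [min_le_right ε (r / 2)],
    fun y hy => hεp y (ball_subset_ball (min_le_left _ _) hy)⟩

lemma hasDerivAt_inv_of_cexp_eventuallyEq {L : ℂ → ℂ} {z : ℂ} (hL : DifferentiableAt ℂ L z)
    (hexp : ∀ᶠ w in 𝓝 z, exp (L w) = w) : HasDerivAt L z⁻¹ z := by
  have hid : HasDerivAt id (exp (L z) * deriv L z) z :=
    hL.hasDerivAt.cexp.congr_of_eventuallyEq (hexp.mono fun _ hw => hw.symm)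
  have hmul : z * deriv L z = 1 := by
    simpa only [hexp.self_of_nhds] using hid.unique (hasDerivAt_id z)
  exact eq_inv_of_mul_eq_one_right hmul ▸ hL.hasDerivAt

lemma hasDerivAt_div_add_add_const_mul {G L : ℂ → ℂ} {a k z : ℂ} (hz : z ≠ 0)
    (hG : DifferentiableAt ℂ G z) (hL : HasDerivAt L z⁻¹ z) :
    HasDerivAt (fun w => a / w + G w + k * L w)
      ((-a + k * z + z ^ 2 * deriv G z) / z ^ 2) z := by
  have hinv : HasDerivAt (fun w => a / w) (-(a / z ^ 2)) z := by
    simpa [div_eq_mul_inv] using (hasDerivAt_inv hz).const_mul a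
  refine ((hinv.add hG.hasDerivAt).add (hL.const_mul k)).congr_deriv ?_
  field_simp
  ring

lemma eqOn_deriv_of_eqOn_div_add_add_mul_log {U : Set ℂ} (hU : IsOpen U) (h0 : (0 : ℂ) ∉ U)
    {G L φ : ℂ → ℂ} {a k : ℂ} (hG : DifferentiableOn ℂ G U) (hL : DifferentiableOn ℂ L U)
    (hexp : ∀ z ∈ U, exp (L z) = z) (hφ : ∀ z ∈ U, φ z = a / z + G z + k * L z) :
    EqOn (deriv φ) (fun w => (-a + k * w + w ^ 2 * deriv G w) / w ^ 2) U := by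
  intro z hz
  have hz0 : z ≠ 0 := fun h => h0 (h ▸ hz)
  have hLz := hasDerivAt_inv_of_cexp_eventuallyEq (hL.differentiableAt (hU.mem_nhds hz))
    (eventually_of_mem (hU.mem_nhds hz) hexp)
  exact ((hasDerivAt_div_add_add_const_mul hz0 (hG.differentiableAt (hU.mem_nhds hz))
    hLz).congr_of_eventuallyEq (eventually_of_mem (hU.mem_nhds hz) hφ)).deriv

lemma logDeriv_const_add_mul_add_sq_mul_zero (b k : ℂ) {H : ℂ → ℂ}
    (hH : DifferentiableAt ℂ H 0) :
    logDeriv (fun w => b + k * w + w ^ 2 * H w) 0 = k / b := by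
  have hderiv : HasDerivAt (fun w => b + k * w + w ^ 2 * H w)
      (k * 1 + ((2 : ℕ) * 0 ^ 1 * H 0 + 0 ^ 2 * deriv H 0)) 0 :=
    (((hasDerivAt_id 0).const_mul k).const_add b).add ((hasDerivAt_pow 2 0).mul hH.hasDerivAt)
  simp [logDeriv_apply, hderiv.deriv]

noncomputable def schwarzianRegularPart (Q : ℂ → ℂ) (w : ℂ) : ℂ :=
  deriv Q w - 1 / 2 * Q w ^ 2 + 2 * dslope Q 0 w

lemma AnalyticOnNhd.differentiableOn_schwarzianRegularPart {Q : ℂ → ℂ} {U : Set ℂ}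
    (hQ : AnalyticOnNhd ℂ Q U) (hU : U ∈ 𝓝 0) :
    DifferentiableOn ℂ (schwarzianRegularPart Q) U :=
  (hQ.deriv.differentiableOn.sub ((hQ.differentiableOn.pow 2).const_mul _)).add
    (((Complex.differentiableOn_dslope hU).mpr hQ.differentiableOn).const_mul _)

theorem schwarzian_eq_of_deriv_eventuallyEq_div_sq {f P : ℂ → ℂ} {z : ℂ} (hz : z ≠ 0)
    (hP : AnalyticAt ℂ P z) (hPz : P z ≠ 0)
    (hf : deriv f =ᶠ[𝓝 z] fun w => P w / w ^ 2) :
    schwarzian f z = schwarzianRegularPart (logDeriv P) z + 2 * logDeriv P 0 / z := by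
  have hratio : (fun w => deriv (deriv f) w / deriv f w) =ᶠ[𝓝 z]
      fun w => logDeriv P w - 2 / w := by
    filter_upwards [hf.eventuallyEq_nhds, hP.eventually_analyticAt,
      hP.continuousAt.eventually_ne hPz, eventually_ne_nhds hz] with w hfw hPw hPw0 hw0
    rw [← logDeriv_apply, (logDeriv_congr_nhds hfw).eq_of_nhds,
      logDeriv_div (g := fun w => w ^ 2) w hPw0 (pow_ne_zero 2 hw0) hPw.differentiableAt
        (differentiableAt_pow 2), logDeriv_pow]
    push_cast
    ring
  have hQ : HasDerivAt (fun w => logDeriv P w - 2 / w)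
      (deriv (logDeriv P) z + 2 / z ^ 2) z := by
    have hd : DifferentiableAt ℂ (logDeriv P) z := (hP.deriv.div hP hPz).differentiableAt
    have h2 : HasDerivAt (fun w => 2 / w) (-(2 / z ^ 2)) z := by
      simpa [div_eq_mul_inv] using (hasDerivAt_inv hz).const_mul 2
    rw [← sub_neg_eq_add]
    exact hd.hasDerivAt.sub h2
  rw [schwarzian, hratio.deriv_eq, hratio.eq_of_nhds, hQ.deriv, schwarzianRegularPart,
    dslope_of_ne _ hz, slope_def_field]
  field_simp
  ring

/-- for `φ(z) = a₋₁/z + G(z) + (c/2πi)·L(z)` (`G` holomorphic on `𝔻`,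
`a₋₁ ≠ 0`, `L` a branch of logarithm on `𝔻 ∖ l^θ`), there is `ρ ∈ (0,1)` such that
`φ'` is nonvanishing on `B(0,ρ) ∖ l^θ` and `S(φ)(z) + c/(a₋₁·π·i·z)` extends
holomorphically to `B(0,ρ)`; i.e. `S(φ)` has at most a simple pole at `0` with
residue `-c/(a₋₁·π·i)`. -/
theorem schwarzian_simple_pole_residue
    (G : ℂ → ℂ) (hG : DifferentiableOn ℂ G (ball (0 : ℂ) 1))
    (a : ℂ) (ha : a ≠ 0) (c : ℂ) (θ : ℝ) (L : ℂ → ℂ)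
    (hL : DifferentiableOn ℂ L (ball (0 : ℂ) 1 \ lray θ))
    (hexp : ∀ z ∈ ball (0 : ℂ) 1 \ lray θ, Complex.exp (L z) = z)
    (φ : ℂ → ℂ)
    (hφ : ∀ z ∈ ball (0 : ℂ) 1 \ lray θ,
      φ z = a / z + G z + c / (2 * (Real.pi : ℂ) * Complex.I) * L z) :
    ∃ ρ : ℝ, 0 < ρ ∧ ρ < 1 ∧
      (∀ z ∈ ball (0 : ℂ) ρ \ lray θ, deriv φ z ≠ 0) ∧
      ∃ h : ℂ → ℂ, DifferentiableOn ℂ h (ball (0 : ℂ) ρ) ∧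
        ∀ z ∈ ball (0 : ℂ) ρ \ lray θ,
          h z = schwarzian φ z + c / (a * (Real.pi : ℂ) * Complex.I * z) := by
  set k := c / (2 * (Real.pi : ℂ) * I)
  set P : ℂ → ℂ := fun w => -a + k * w + w ^ 2 * deriv G w
  have hU : IsOpen (ball (0 : ℂ) 1 \ lray θ) := isOpen_ball.sdiff (isClosed_lray θ)
  have hφ' := eqOn_deriv_of_eqOn_div_add_add_mul_log hU (fun h => h.2 (zero_mem_lray θ))
    (hG.mono sdiff_subset) hL hexp hφ
  have hG' : AnalyticOnNhd ℂ (deriv G) (ball 0 1) := (hG.analyticOnNhd isOpen_ball).deriv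
  have hP : AnalyticOnNhd ℂ P (ball 0 1) := fun w hw => by
    have := hG' w hw
    fun_prop
  obtain ⟨ρ, hρ0, hρ1, hPρ⟩ := exists_lt_forall_mem_ball_of_eventually
    ((hP 0 (mem_ball_self one_pos)).continuousAt.eventually_ne
      (show P 0 ≠ 0 by simpa [P] using ha)) one_pos
  have hρU : ball (0 : ℂ) ρ ⊆ ball 0 1 := ball_subset_ball hρ1.le
  have hQ : AnalyticOnNhd ℂ (logDeriv P) (ball 0 ρ) := fun w hw =>
    (hP w (hρU hw)).deriv.div (hP w (hρU hw)) (hPρ w hw)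
  have hQ0 : logDeriv P 0 = k / -a :=
    logDeriv_const_add_mul_add_sq_mul_zero _ _ (hG' 0 (mem_ball_self one_pos)).differentiableAt
  refine ⟨ρ, hρ0, hρ1, fun z hz => ?_, schwarzianRegularPart (logDeriv P),
    hQ.differentiableOn_schwarzianRegularPart (ball_mem_nhds 0 hρ0), fun z hz => ?_⟩
  · rw [hφ' ⟨hρU hz.1, hz.2⟩]
    exact div_ne_zero (hPρ z hz.1) (pow_ne_zero 2 fun h => hz.2 (h ▸ zero_mem_lray θ))
  · have hz0 : z ≠ 0 := fun h => hz.2 (h ▸ zero_mem_lray θ)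
    have hπ : (Real.pi : ℂ) ≠ 0 := ofReal_ne_zero.mpr Real.pi_ne_zero
    rw [schwarzian_eq_of_deriv_eventuallyEq_div_sq hz0 (hP z (hρU hz.1)) (hPρ z hz.1)
      (eventually_of_mem (hU.mem_nhds ⟨hρU hz.1, hz.2⟩) hφ'), hQ0]
    simp only [k]
    field_simp
    ring
end

section
/- Let U ⊆ ℂ be a nonempty open connected set and let (f_k) be a sequence of holomorphic functions on U such that each f_k is injective on U and the images f_k(U) are pairwise disjoint (f_{k₁}(U) ∩ f_{k₂}(U) = ∅ whenever k₁ ≠ k₂). If some subsequence (f_{k_n}) converges locally uniformly on U to a function F, then F is constant. -/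
open Complex Metric Set Filter Topology

/-!
A Hurwitz-type argument. If `F` were not constant, pick `z₀ ∈ U`; the value `w = F z₀` is
isolated, so `F ≠ w` on a small circle around `z₀`. By the minimum modulus principle applied to
`f_{κ n} - w`, every `f_{κ n}` uniformly close to `F` on the disc takes the value `w` inside it.
Hence `w` lies in the images of two different `f_k`, contradicting disjointness.
-/

theorem exists_mem_closedBall_eq_of_norm_sub_lt {g : ℂ → ℂ} {z₀ w : ℂ} {r ε : ℝ} (hr : 0 < r)
    (hg : DifferentiableOn ℂ g (closedBall z₀ r)) (hcentre : ‖g z₀ - w‖ < ε)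
    (hsphere : ∀ z ∈ sphere z₀ r, ε ≤ ‖g z - w‖) :
    ∃ z ∈ closedBall z₀ r, g z = w := by
  by_contra! hne
  have hε : 0 < ε := (norm_nonneg _).trans_lt hcentre
  rw [← closure_ball z₀ hr.ne'] at hne
  have hinv : DiffContOnCl ℂ (fun z => (g z - w)⁻¹) (ball z₀ r) :=
    ((hg.diffContOnCl_ball subset_rfl).sub_const w).inv fun z hz => sub_ne_zero.2 (hne z hz)
  have hbound : ∀ z ∈ frontier (ball z₀ r), ‖(g z - w)⁻¹‖ ≤ ε⁻¹ := by
    rw [frontier_ball z₀ hr.ne']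
    intro z hz
    rw [norm_inv]
    exact inv_anti₀ hε (hsphere z hz)
  have hle : ‖(g z₀ - w)⁻¹‖ ≤ ε⁻¹ :=
    norm_le_of_forall_mem_frontier_norm_le isBounded_ball hinv hbound
      (subset_closure (mem_ball_self hr))
  rw [norm_inv] at hle
  have hpos : 0 < ‖g z₀ - w‖ :=
    norm_pos_iff.2 (sub_ne_zero.2 (hne z₀ (subset_closure (mem_ball_self hr))))
  exact absurd ((inv_le_inv₀ hpos hε).1 hle) (not_le.2 hcentre)

theorem eventually_exists_mem_closedBall_eq {ι : Type*} {l : Filter ι} {g : ι → ℂ → ℂ}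
    {F : ℂ → ℂ} {z₀ : ℂ} {r : ℝ} (hr : 0 < r)
    (hg : ∀ᶠ n in l, DifferentiableOn ℂ (g n) (closedBall z₀ r))
    (hFc : ContinuousOn F (sphere z₀ r))
    (hlim : TendstoUniformlyOn g F l (closedBall z₀ r)) (hsphere : ∀ z ∈ sphere z₀ r, F z ≠ F z₀) :
    ∀ᶠ n in l, ∃ z ∈ closedBall z₀ r, g n z = F z₀ := by
  obtain ⟨zm, hzm, hmin⟩ := (isCompact_sphere z₀ r).exists_isMinOn
    (NormedSpace.sphere_nonempty.2 hr.le) ((hFc.sub continuousOn_const).norm)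
  set ε := ‖F zm - F z₀‖
  have hε : 0 < ε := norm_pos_iff.2 (sub_ne_zero.2 (hsphere zm hzm))
  filter_upwards [hg, Metric.tendstoUniformlyOn_iff.1 hlim (ε / 2) (half_pos hε)] with n hgn hclose
  refine exists_mem_closedBall_eq_of_norm_sub_lt hr hgn (ε := ε / 2) ?_ fun z hz => ?_
  · simpa [dist_eq_norm, norm_sub_rev] using hclose z₀ (mem_closedBall_self hr.le)
  · have hFz : ε ≤ ‖F z - F z₀‖ := hmin hz
    have hgz : ‖F z - g n z‖ < ε / 2 := by
      simpa [dist_eq_norm] using hclose z (sphere_subset_closedBall hz)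
    calc ε / 2 ≤ ‖F z - F z₀‖ - ‖F z - g n z‖ := by linarith
      _ ≤ ‖(F z - F z₀) - (F z - g n z)‖ := norm_sub_norm_le _ _
      _ = ‖g n z - F z₀‖ := by rw [sub_sub_sub_cancel_left]

theorem AnalyticOnNhd.exists_closedBall_subset_forall_sphere_ne {F : ℂ → ℂ} {U : Set ℂ}
    (hF : AnalyticOnNhd ℂ F U) (hU : IsOpen U) (hUc : IsPreconnected U) {z₀ z₁ : ℂ}
    (hz₀ : z₀ ∈ U) (hz₁ : z₁ ∈ U) (hne : F z₁ ≠ F z₀) :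
    ∃ r > 0, closedBall z₀ r ⊆ U ∧ ∀ z ∈ sphere z₀ r, F z ≠ F z₀ := by
  have hisol : ∀ᶠ z in 𝓝[≠] z₀, F z ≠ F z₀ := by
    refine ((hF z₀ hz₀).eventually_eq_or_eventually_ne analyticAt_const).resolve_left
      fun heq => hne ?_
    exact hF.eqOn_of_preconnected_of_eventuallyEq (fun _ _ => analyticAt_const) hUc hz₀ heq hz₁
  rw [eventually_nhdsWithin_iff] at hisol
  obtain ⟨r, hr, hball⟩ := nhds_basis_closedBall.mem_iff.1
    (Filter.inter_mem (hU.mem_nhds hz₀) hisol)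
  exact ⟨r, hr, fun z hz => (hball hz).1,
    fun z hz => (hball (sphere_subset_closedBall hz)).2 (ne_of_mem_sphere hz hr.ne')⟩

theorem TendstoLocallyUniformlyOn.eventually_mem_image {ι : Type*} {l : Filter ι} [l.NeBot]
    {g : ι → ℂ → ℂ} {F : ℂ → ℂ} {U : Set ℂ} (hU : IsOpen U) (hUc : IsPreconnected U)
    (hg : ∀ᶠ n in l, DifferentiableOn ℂ (g n) U) (hlim : TendstoLocallyUniformlyOn g F l U)
    {z₀ z₁ : ℂ} (hz₀ : z₀ ∈ U) (hz₁ : z₁ ∈ U) (hne : F z₁ ≠ F z₀) :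
    ∀ᶠ n in l, F z₀ ∈ g n '' U := by
  have hF : DifferentiableOn ℂ F U := hlim.differentiableOn hg hU
  obtain ⟨r, hr, hBU, hsphere⟩ :=
    (hF.analyticOnNhd hU).exists_closedBall_subset_forall_sphere_ne hU hUc hz₀ hz₁ hne
  have hunif : TendstoUniformlyOn g F l (closedBall z₀ r) :=
    (tendstoLocallyUniformlyOn_iff_forall_isCompact hU).1 hlim _ hBU (isCompact_closedBall _ _)
  filter_upwards [eventually_exists_mem_closedBall_eq hr (hg.mono fun n hgn => hgn.mono hBU)
    (hF.continuousOn.mono (sphere_subset_closedBall.trans hBU)) hunif hsphere]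
    with n ⟨z, hz, hgz⟩
  exact ⟨z, hBU hz, hgz⟩

theorem limit_of_disjoint_injective_maps_constant_general
    (U : Set ℂ) (hU : IsOpen U) (hUc : IsConnected U)
    (f : ℕ → ℂ → ℂ) (F : ℂ → ℂ)
    (hf : ∀ k, DifferentiableOn ℂ (f k) U)
    (hdisj : ∀ k₁ k₂, k₁ ≠ k₂ → f k₁ '' U ∩ f k₂ '' U = ∅)
    (κ : ℕ → ℕ) (hκ : StrictMono κ)
    (hconv : TendstoLocallyUniformlyOn (fun n => f (κ n)) F atTop U) :
    ∃ C : ℂ, ∀ z ∈ U, F z = C := by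
  obtain ⟨z₀, hz₀⟩ := hUc.nonempty
  refine ⟨F z₀, fun z₁ hz₁ => ?_⟩
  by_contra hne
  obtain ⟨N, hN⟩ := eventually_atTop.1 <| hconv.eventually_mem_image hU hUc.isPreconnected
    (Eventually.of_forall fun n => hf (κ n)) hz₀ hz₁ hne
  have hmem : F z₀ ∈ f (κ N) '' U ∩ f (κ (N + 1)) '' U := ⟨hN N le_rfl, hN (N + 1) N.le_succ⟩
  rwa [hdisj _ _ (hκ.injective.ne N.succ_ne_self.symm)] at hmem

/-- a locally uniform limit of a subsequence of injective holomorphic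
maps with pairwise disjoint images on a nonempty open connected set is constant. -/
theorem limit_of_disjoint_injective_maps_constant
    (U : Set ℂ) (hU : IsOpen U) (hUc : IsConnected U)
    (f : ℕ → ℂ → ℂ) (F : ℂ → ℂ)
    (hf : ∀ k, DifferentiableOn ℂ (f k) U)
    (hinj : ∀ k, InjOn (f k) U)
    (hdisj : ∀ k₁ k₂, k₁ ≠ k₂ → f k₁ '' U ∩ f k₂ '' U = ∅)
    (κ : ℕ → ℕ) (hκ : StrictMono κ)
    (hconv : TendstoLocallyUniformlyOn (fun n => f (κ n)) F atTop U) :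
    ∃ C : ℂ, ∀ z ∈ U, F z = C :=
  limit_of_disjoint_injective_maps_constant_general U hU hUc f F hf hdisj κ hκ hconv
end
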